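/- arXiv:1206.3695 — 3 statements merged into one kernel-verified Lean document; each statement's English description precedes it below -/
import Mathlib

section
/- Let n ≥ 1 and let α : [n] → ℝ be nonnegative with ∑_{i=1}^n α_i² = 1. Let φ ∈ ℂⁿ⊗ℂⁿ be the vector with coordinates φ_{(i,j)} = α_i if i = j and 0 otherwise, and let ρ = φφᴴ be the corresponding rank-one density matrix on ℂⁿ⊗ℂⁿ. Then the infimum, over all finite decompositions ρ = ∑_{k=1}^m A_k ⊗ B_k into Kronecker products of complex n×n matrices, of ∑_{k=1}^m ‖A_k‖₁·‖B_k‖₁, equals (∑_{i=1}^n α_i)². (That is, the projective tensor norm of the pure state ρ in S₁ⁿ ⊗_π S₁ⁿ equals the square of the ℓ₁-norm of its Schmidt coefficients.) -/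
open scoped BigOperators
open Matrix Kronecker
open scoped ComplexOrder

noncomputable def posSemidefSqrt {n : ℕ} {A : Matrix (Fin n) (Fin n) ℂ} (hA : A.PosSemidef) :
    Matrix (Fin n) (Fin n) ℂ :=
  (hA.1.eigenvectorUnitary : Matrix (Fin n) (Fin n) ℂ) *
    diagonal ((↑) ∘ (Real.sqrt ·) ∘ hA.1.eigenvalues) *
    (star hA.1.eigenvectorUnitary : Matrix (Fin n) (Fin n) ℂ)

/-- The trace norm of a complex `n × n` matrix: the trace of the positive
semidefinite square root of `Aᴴ * A`. -/
noncomputable def traceNorm {n : ℕ} (A : Matrix (Fin n) (Fin n) ℂ) : ℝ :=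
  (posSemidefSqrt (Matrix.posSemidef_conjTranspose_mul_self A)).trace.re

section
open scoped MatrixOrder

lemma posSemidefSqrt_eq_sqrt {n : ℕ} {A : Matrix (Fin n) (Fin n) ℂ} (hA : A.PosSemidef) :
    posSemidefSqrt hA = CFC.sqrt A := by
  rw [CFC.sqrt_eq_real_sqrt A hA.nonneg, cfcₙ_eq_cfc, hA.1.cfc_eq, Matrix.IsHermitian.cfc,
    Unitary.conjStarAlgAut_apply]
  rfl

lemma posSemidefSqrt_eq_of_sq {n : ℕ} {S P : Matrix (Fin n) (Fin n) ℂ} (hS : S.PosSemidef)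
    (hP : P.PosSemidef) (h : S ^ 2 = P) : S = posSemidefSqrt hP := by
  rw [posSemidefSqrt_eq_sqrt]
  exact (CFC.sqrt_unique (by rw [← pow_two]; exact h) hS.nonneg).symm

end


lemma conjT_std {n : ℕ} (i j : Fin n) :
    (Matrix.single i j (1:ℂ))ᴴ = Matrix.single j i 1 := by
  ext a b
  simp [Matrix.single, Matrix.conjTranspose_apply, and_comm, apply_ite]

lemma traceNorm_smul_std {n : ℕ} (i j : Fin n) (c : ℝ) (hc : 0 ≤ c) :
    traceNorm ((c:ℂ) • Matrix.single i j 1) = c := by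
  set M := (c:ℂ) • Matrix.single i j (1:ℂ) with hM
  set S := (c:ℂ) • Matrix.single j j (1:ℂ) with hS
  have hE : (Matrix.single j j (1:ℂ))ᴴ = Matrix.single j j 1 := conjT_std j j
  have hSpsd : S.PosSemidef := by
    have : S = ((Real.sqrt c : ℂ) • Matrix.single j j (1:ℂ))ᴴ *
        ((Real.sqrt c : ℂ) • Matrix.single j j (1:ℂ)) := by
      rw [Matrix.conjTranspose_smul, hE]
      simp [hS, Matrix.smul_mul, Matrix.mul_smul, smul_smul, ← Complex.ofReal_mul,
        Real.mul_self_sqrt hc]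
    rw [this]
    exact Matrix.posSemidef_conjTranspose_mul_self _
  have hsq : S ^ 2 = Mᴴ * M := by
    rw [pow_two, hS, hM, Matrix.conjTranspose_smul, conjT_std]
    simp [Matrix.smul_mul, Matrix.mul_smul, smul_smul, mul_comm]
  have := (Matrix.posSemidef_conjTranspose_mul_self M)
  have hsqrt : S = posSemidefSqrt this := posSemidefSqrt_eq_of_sq hSpsd this hsq
  rw [traceNorm, ← hsqrt, hS]
  simp [Matrix.trace_smul, Matrix.trace, Matrix.diag, Matrix.single, Finset.sum_ite_eq]


lemma traceNorm_repr {n : ℕ} (A : Matrix (Fin n) (Fin n) ℂ) :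
    ∃ (σ : Fin n → ℝ) (u v : Fin n → (Fin n → ℂ)),
      (∀ i, 0 ≤ σ i) ∧ traceNorm A = ∑ i, σ i ∧
      (∀ i, ∑ p, Complex.normSq (u i p) ≤ 1) ∧
      (∀ i, ∑ p, Complex.normSq (v i p) ≤ 1) ∧
      (∀ p q, A p q = ∑ i, (σ i : ℂ) * u i p * (starRingEnd ℂ) (v i q)) := by
  have hP := Matrix.posSemidef_conjTranspose_mul_self A
  set hH := hP.1 with hHdef
  set lam := hH.eigenvalues with hlam
  have hlam0 : ∀ i, 0 ≤ lam i := hP.eigenvalues_nonneg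
  set v : Fin n → Fin n → ℂ := fun i => ⇑(hH.eigenvectorBasis i) with hv
  set σ : Fin n → ℝ := fun i => Real.sqrt (lam i) with hσ
  set u : Fin n → Fin n → ℂ :=
    fun i => if σ i = 0 then 0 else ((σ i : ℂ))⁻¹ • (A *ᵥ v i) with hu
  -- v i is a unit vector
  have hvnormC : ∀ i, (∑ p, (Complex.normSq (v i p) : ℂ)) = 1 := by
    intro i
    have horth := orthonormal_iff_ite.mp hH.eigenvectorBasis.orthonormal i i
    rw [if_pos rfl, PiLp.inner_apply] at horth
    rw [← horth]
    refine Finset.sum_congr rfl fun p _ => ?_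
    simp [RCLike.inner_apply, Complex.normSq_eq_conj_mul_self, hv, Complex.conj_mul']
  have hvnorm : ∀ i, ∑ p, Complex.normSq (v i p) = 1 := by
    intro i
    have := hvnormC i
    rw [← Complex.ofReal_sum] at this
    exact_mod_cast this
  -- norm of A *ᵥ v i
  have hAv : ∀ i, ∑ p, Complex.normSq ((A *ᵥ v i) p) = lam i := by
    intro i
    have h1 : star (A *ᵥ v i) ⬝ᵥ (A *ᵥ v i) = ((lam i : ℝ) : ℂ) := by
      rw [Matrix.star_mulVec, ← dotProduct_mulVec, Matrix.mulVec_mulVec]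
      have h2 : (Aᴴ * A) *ᵥ v i = (lam i : ℝ) • v i := by
        have := hH.mulVec_eigenvectorBasis i
        simpa [hv] using this
      rw [h2]
      simp only [dotProduct, Pi.smul_apply, Pi.star_apply]
      have : ∀ p, star (v i p) * ((lam i : ℝ) • v i p) =
          (lam i : ℝ) * (Complex.normSq (v i p) : ℂ) := by
        intro p
        simp [Complex.real_smul, Complex.normSq_eq_conj_mul_self]
        ring
      rw [Finset.sum_congr rfl (fun p _ => this p), ← Finset.mul_sum]
      have := hvnorm i
      rw [← Complex.ofReal_sum] at *
      push_cast
      rw [show (∑ p, (Complex.normSq (v i p) : ℂ)) = (1:ℂ) by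
        rw [← Complex.ofReal_sum, hvnorm i]; norm_num]
      ring
    have h3 : star (A *ᵥ v i) ⬝ᵥ (A *ᵥ v i) =
        ((∑ p, Complex.normSq ((A *ᵥ v i) p) : ℝ) : ℂ) := by
      simp only [dotProduct, Pi.star_apply, Complex.ofReal_sum]
      exact Finset.sum_congr rfl fun p _ => by
        rw [Complex.normSq_eq_conj_mul_self, starRingEnd_apply]
    rw [h3] at h1
    exact_mod_cast h1
  refine ⟨σ, u, v, fun i => Real.sqrt_nonneg _, ?_, ?_, ?_, ?_⟩
  · -- trace norm = ∑ σ
    rw [traceNorm, posSemidefSqrt]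
    rw [Matrix.trace_mul_comm, ← Matrix.mul_assoc]
    have hU : (star hP.1.eigenvectorUnitary.1 : Matrix (Fin n) (Fin n) ℂ) *
        hP.1.eigenvectorUnitary.1 = 1 := by
      exact Matrix.UnitaryGroup.star_mul_self _
    rw [hU, Matrix.one_mul, Matrix.trace_diagonal]
    simp [σ, lam, hHdef]
  · -- u bounded
    intro i
    by_cases h : σ i = 0
    · simp [hu, h]
    · have hval : ∑ p, Complex.normSq (u i p) = 1 := by
        simp only [hu, if_neg h]
        have : ∀ p, Complex.normSq ((((σ i : ℂ))⁻¹ • (A *ᵥ v i)) p) =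
            (σ i)⁻¹ ^ 2 * Complex.normSq ((A *ᵥ v i) p) := by
          intro p
          simp [Pi.smul_apply, Complex.normSq_mul, Complex.normSq_inv, sq]
        rw [Finset.sum_congr rfl fun p _ => this p, ← Finset.mul_sum, hAv i]
        have : (σ i) ^ 2 = lam i := Real.sq_sqrt (hlam0 i)
        field_simp [← this]
        exact this.symm
      rw [hval]
  · intro i; rw [hvnorm i]
  · -- representation
    intro p q
    have hC : ∀ l, (σ l : ℂ) * u l p = (A *ᵥ v l) p := by
      intro l
      by_cases h : σ l = 0
      · have hlam_z : lam l = 0 := by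
          have := Real.sqrt_eq_zero (hlam0 l) |>.mp h
          exact this
        have : ∑ r, Complex.normSq ((A *ᵥ v l) r) = 0 := by rw [hAv l, hlam_z]
        have hz : (A *ᵥ v l) p = 0 := by
          have := (Finset.sum_eq_zero_iff_of_nonneg
            (fun r _ => Complex.normSq_nonneg _)).mp this p (Finset.mem_univ p)
          exact Complex.normSq_eq_zero.mp this
        simp [hu, h, hz]
      · simp only [hu, if_neg h]
        have : (σ l : ℂ) ≠ 0 := by exact_mod_cast h
        field_simp
        rw [Pi.smul_apply, smul_eq_mul, ← mul_assoc, mul_one_div_cancel this, one_mul]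
    have key : A = A * (hH.eigenvectorUnitary.1 * star hH.eigenvectorUnitary.1) := by
      rw [(Matrix.mem_unitaryGroup_iff).mp hH.eigenvectorUnitary.2, Matrix.mul_one]
    calc A p q = (A * hH.eigenvectorUnitary.1 * (star hH.eigenvectorUnitary.1)) p q := by
          conv_lhs => rw [key]; rw [← Matrix.mul_assoc]
      _ = ∑ l, (A *ᵥ v l) p * (starRingEnd ℂ) (v l q) := by
          rw [Matrix.mul_apply]
          exact Finset.sum_congr rfl fun l _ => rfl
      _ = ∑ l, (σ l : ℂ) * u l p * (starRingEnd ℂ) (v l q) := by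
          refine Finset.sum_congr rfl fun l _ => ?_
          rw [hC l]


lemma cs_le_one {n : ℕ} (f g : Fin n → ℂ)
    (hf : ∑ p, Complex.normSq (f p) ≤ 1) (hg : ∑ p, Complex.normSq (g p) ≤ 1) :
    ‖∑ p, f p * g p‖ ≤ 1 := by
  calc ‖∑ p, f p * g p‖ ≤ ∑ p, ‖f p‖ * ‖g p‖ := by
        refine (norm_sum_le _ _).trans ?_
        exact le_of_eq (Finset.sum_congr rfl fun p _ => norm_mul _ _)
    _ ≤ 1 := by
        have h := Finset.sum_mul_sq_le_sq_mul_sq Finset.univ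
          (fun p => ‖f p‖) (fun p => ‖g p‖)
        have hf' : ∑ p, ‖f p‖ ^ 2 ≤ 1 := by
          simpa [Complex.sq_norm] using hf
        have hg' : ∑ p, ‖g p‖ ^ 2 ≤ 1 := by
          simpa [Complex.sq_norm] using hg
        have h0 : (0:ℝ) ≤ ∑ p, ‖f p‖ * ‖g p‖ :=
          Finset.sum_nonneg fun p _ => mul_nonneg (norm_nonneg _) (norm_nonneg _)
        have hf0 : (0:ℝ) ≤ ∑ p, ‖f p‖ ^ 2 :=
          Finset.sum_nonneg fun p _ => sq_nonneg _
        have hg0 : (0:ℝ) ≤ ∑ p, ‖g p‖ ^ 2 :=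
          Finset.sum_nonneg fun p _ => sq_nonneg _
        nlinarith [h]


lemma pairing_le {n : ℕ} (A B : Matrix (Fin n) (Fin n) ℂ) :
    ‖∑ p, ∑ q, A p q * B p q‖ ≤ traceNorm A * traceNorm B := by
  obtain ⟨σ, u, v, hσ0, hσ, hu, hv, hA⟩ := traceNorm_repr A
  obtain ⟨τ, x, y, hτ0, hτ, hx, hy, hB⟩ := traceNorm_repr B
  have key : ∑ p, ∑ q, A p q * B p q
      = ∑ i, ∑ j, ((σ i : ℂ) * (τ j : ℂ)) *
        ((∑ p, u i p * x j p) *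
         (∑ q, (starRingEnd ℂ) (v i q) * (starRingEnd ℂ) (y j q))) := by
    have ht : ∀ p q, A p q * B p q = ∑ i, ∑ j,
        ((σ i : ℂ) * (τ j : ℂ)) * ((u i p * x j p) *
          ((starRingEnd ℂ) (v i q) * (starRingEnd ℂ) (y j q))) := by
      intro p q
      rw [hA, hB, Finset.sum_mul_sum]
      exact Finset.sum_congr rfl fun i _ => Finset.sum_congr rfl fun j _ => by ring
    simp only [ht]
    conv_lhs => enter [2, p]; rw [Finset.sum_comm]
    conv_lhs => rw [Finset.sum_comm]
    conv_lhs => enter [2, i, 2, p]; rw [Finset.sum_comm]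
    conv_lhs => enter [2, i]; rw [Finset.sum_comm]
    refine Finset.sum_congr rfl fun i _ => Finset.sum_congr rfl fun j _ => ?_
    rw [Finset.sum_mul_sum, Finset.mul_sum]
    refine Finset.sum_congr rfl fun p _ => ?_
    rw [Finset.mul_sum]
  rw [key, hσ, hτ]
  calc ‖∑ i, ∑ j, ((σ i : ℂ) * (τ j : ℂ)) *
        ((∑ p, u i p * x j p) *
         (∑ q, (starRingEnd ℂ) (v i q) * (starRingEnd ℂ) (y j q)))‖
      ≤ ∑ i, ∑ j, σ i * τ j := by
        refine (norm_sum_le _ _).trans ?_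
        refine Finset.sum_le_sum fun i _ => ?_
        refine (norm_sum_le _ _).trans ?_
        refine Finset.sum_le_sum fun j _ => ?_
        rw [norm_mul, norm_mul, norm_mul]
        have h1 : ‖∑ p, u i p * x j p‖ ≤ 1 := cs_le_one _ _ (hu i) (hx j)
        have h2 : ‖∑ q, (starRingEnd ℂ) (v i q) * (starRingEnd ℂ) (y j q)‖ ≤ 1 := by
          refine cs_le_one _ _ ?_ ?_ <;> simp [Complex.normSq_conj, hv i, hy j]
        have ha : ‖(σ i : ℂ)‖ = σ i := by
          exact Complex.norm_of_nonneg (hσ0 i)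
        have hb : ‖(τ j : ℂ)‖ = τ j := by
          exact Complex.norm_of_nonneg (hτ0 j)
        rw [ha, hb]
        have hab : ‖∑ p, u i p * x j p‖ *
            ‖∑ q, (starRingEnd ℂ) (v i q) * (starRingEnd ℂ) (y j q)‖ ≤ 1 := by
          nlinarith [norm_nonneg (∑ p, u i p * x j p),
            norm_nonneg (∑ q, (starRingEnd ℂ) (v i q) * (starRingEnd ℂ) (y j q))]
        calc σ i * τ j * (‖∑ p, u i p * x j p‖ *
              ‖∑ q, (starRingEnd ℂ) (v i q) * (starRingEnd ℂ) (y j q)‖)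
            ≤ σ i * τ j * 1 :=
              mul_le_mul_of_nonneg_left hab (mul_nonneg (hσ0 i) (hτ0 j))
          _ = σ i * τ j := mul_one _
    _ = (∑ i, σ i) * (∑ j, τ j) := by rw [Finset.sum_mul_sum]


theorem stmt2 (n : ℕ) (hn : 1 ≤ n) (α : Fin n → ℝ)
    (hα0 : ∀ i, 0 ≤ α i) (hα2 : ∑ i, (α i) ^ 2 = 1)
    (φ : Fin n × Fin n → ℂ)
    (hφ : ∀ p, φ p = if p.1 = p.2 then (α p.1 : ℂ) else 0)
    (ρ : Matrix (Fin n × Fin n) (Fin n × Fin n) ℂ)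
    (hρ : ∀ p q, ρ p q = φ p * (starRingEnd ℂ) (φ q)) :
    sInf { s : ℝ | ∃ (m : ℕ) (A B : Fin m → Matrix (Fin n) (Fin n) ℂ),
        ρ = ∑ k, (A k) ⊗ₖ (B k) ∧ s = ∑ k, traceNorm (A k) * traceNorm (B k) }
      = (∑ i, α i) ^ 2 := by
  have hstdTN : ∀ i j : Fin n, traceNorm (Matrix.single i j 1) = 1 := by
    intro i j
    have := traceNorm_smul_std i j 1 zero_le_one
    simpa using this
  apply IsLeast.csInf_eq
  constructor
  · -- membership: explicit decomposition
    set e : Fin (n * n) → Fin n × Fin n := fun k => finProdFinEquiv.symm k with he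
    refine ⟨n * n,
      fun k => ((α (e k).1 * α (e k).2 : ℝ) : ℂ) •
        Matrix.single (e k).1 (e k).2 1,
      fun k => Matrix.single (e k).1 (e k).2 1, ?_, ?_⟩
    · ext p q
      obtain ⟨p₁, p₂⟩ := p
      obtain ⟨q₁, q₂⟩ := q
      rw [Matrix.sum_apply]
      have hre : ∀ (f : Fin n × Fin n → ℂ), ∑ k : Fin (n * n), f (e k) = ∑ ij, f ij :=
        fun f => Equiv.sum_comp finProdFinEquiv.symm f
      rw [hre (fun ij => ((((α ij.1 * α ij.2 : ℝ) : ℂ) •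
        Matrix.single ij.1 ij.2 1) ⊗ₖ (Matrix.single ij.1 ij.2 (1:ℂ)))
          (p₁, p₂) (q₁, q₂))]
      rw [Fintype.sum_prod_type]
      simp only [Matrix.kroneckerMap_apply, Matrix.smul_apply, smul_eq_mul]
      have hz1 : ∀ i, i ≠ p₁ →
          ∑ j, ((α i * α j : ℝ) : ℂ) * Matrix.single i j (1:ℂ) p₁ q₁ *
            Matrix.single i j (1:ℂ) p₂ q₂ = 0 := by
        intro i hi
        refine Finset.sum_eq_zero fun j _ => ?_
        rw [Matrix.single_apply_of_ne (i := i) (j := j) (c := (1:ℂ)) (i' := p₁) (j' := q₁) (by tauto)]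
        ring
      rw [Finset.sum_eq_single p₁ (fun i _ hi => hz1 i hi)
        (fun h => absurd (Finset.mem_univ _) h)]
      rw [Finset.sum_eq_single q₁
        (fun j _ hj => by
          rw [Matrix.single_apply_of_ne (i := p₁) (j := j) (c := (1:ℂ)) (i' := p₁) (j' := q₁) (by tauto)]; ring)
        (fun h => absurd (Finset.mem_univ _) h)]
      rw [Matrix.single_apply_same, hρ, hφ, hφ]
      by_cases h1 : p₁ = p₂
      · by_cases h2 : q₁ = q₂
        · subst h1; subst h2
          rw [Matrix.single_apply_same]
          simp [Complex.conj_ofReal]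
        · rw [Matrix.single_apply_of_ne (i := p₁) (j := q₁) (c := (1:ℂ)) (i' := p₂) (j' := q₂) (by tauto)]
          simp [h1, h2]
      · rw [Matrix.single_apply_of_ne (i := p₁) (j := q₁) (c := (1:ℂ)) (i' := p₂) (j' := q₂) (by tauto)]
        simp [h1]
    · have hterm : ∀ k : Fin (n * n),
          traceNorm (((α (e k).1 * α (e k).2 : ℝ) : ℂ) •
              Matrix.single (e k).1 (e k).2 1)
            * traceNorm (Matrix.single (e k).1 (e k).2 (1:ℂ))
          = α (e k).1 * α (e k).2 := by
        intro k
        rw [traceNorm_smul_std _ _ _ (mul_nonneg (hα0 _) (hα0 _)), hstdTN, mul_one]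
      calc (∑ i, α i) ^ 2 = ∑ ij : Fin n × Fin n, α ij.1 * α ij.2 := by
            rw [Fintype.sum_prod_type, sq, Finset.sum_mul_sum]
        _ = ∑ k : Fin (n * n), α (e k).1 * α (e k).2 :=
            (Equiv.sum_comp finProdFinEquiv.symm
              (fun ij : Fin n × Fin n => α ij.1 * α ij.2)).symm
        _ = _ := Finset.sum_congr rfl fun k _ => (hterm k).symm
  · -- lower bound
    rintro s ⟨m, A, B, hdec, hsval⟩
    have hT : ∑ i, ∑ j, ρ (i, i) (j, j) = (((∑ i, α i) ^ 2 : ℝ) : ℂ) := by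
      have hent : ∀ i j : Fin n, ρ (i, i) (j, j) = ((α i * α j : ℝ) : ℂ) := by
        intro i j
        rw [hρ, hφ, hφ]
        simp [Complex.conj_ofReal, Complex.ofReal_mul]
      simp only [hent]
      push_cast
      rw [sq, Finset.sum_mul_sum]
    have hT2 : ∑ i, ∑ j, ρ (i, i) (j, j) = ∑ k, ∑ i, ∑ j, A k i j * B k i j := by
      simp only [hdec, Matrix.sum_apply, Matrix.kroneckerMap_apply]
      have h1 : ∀ i : Fin n, ∑ j, ∑ k, A k i j * B k i j
          = ∑ k, ∑ j, A k i j * B k i j := fun i => Finset.sum_comm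
      simp only [h1]
      exact Finset.sum_comm
    have hre : ((∑ i, α i) ^ 2 : ℝ) = ∑ k, (∑ i, ∑ j, A k i j * B k i j).re := by
      rw [← Complex.re_sum, ← hT2, hT, Complex.ofReal_re]
    rw [hre, hsval]
    refine Finset.sum_le_sum fun k _ => ?_
    exact (Complex.re_le_norm _).trans (pairing_le (A k) (B k))
end

section
/- There exists a universal constant c > 0 such that for every n ≥ 2 there exist linear maps S : ℝⁿ → ℝⁿ and T : ℝⁿ → ℝⁿ with tr(T ∘ S) = n and ‖T‖·ℓ(S) ≤ c·√(n·ln n), where ‖T‖ is the operator norm of T viewed as a map from ℓ_∞ⁿ to ℓ₂ⁿ and ℓ(S) is the Gaussian norm of S viewed as a map from ℓ₂ⁿ to ℓ_∞ⁿ. (Indeed one may take S and T to be the identity map: ℓ(id : ℓ₂ⁿ → ℓ_∞ⁿ) ≤ c'·√(ln n) and ‖id : ℓ_∞ⁿ → ℓ₂ⁿ‖ = √n. This shows the factor √(n/ln n) in the trace inequality |tr(T∘S)| ≤ C√(n/ln n)‖T‖ℓ(S) is optimal.) -/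
open scoped BigOperators
open MeasureTheory ProbabilityTheory
open scoped ENNReal NNReal

/-- The Gaussian norm `ℓ(f) = (∫ ‖f(g)‖² dγₙ(g))^{1/2}` of a map `f` defined on
`ℓ₂ⁿ`, with respect to the standard Gaussian measure `γₙ` on `ℝⁿ`. -/
noncomputable def gaussNorm {n : ℕ} {Y : Type*} [NormedAddCommGroup Y]
    (f : EuclideanSpace ℝ (Fin n) → Y) : ℝ :=
  Real.sqrt (∫ g : Fin n → ℝ,
    ‖f ((WithLp.equiv 2 (Fin n → ℝ)).symm g)‖ ^ 2
      ∂(Measure.pi fun _ : Fin n => gaussianReal 0 1))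

/-- Pointwise bound: `x² ≤ a + 8·e^{-a/4}·e^{3x²/8}` for `a ≥ 0`. -/
lemma aux_pointwise (a x : ℝ) (ha : 0 ≤ a) :
    x ^ 2 ≤ a + 8 * Real.exp (-(a / 4)) * Real.exp (3 * x ^ 2 / 8) := by
  rcases le_or_gt (x ^ 2) a with h | h
  · have : 0 ≤ 8 * Real.exp (-(a / 4)) * Real.exp (3 * x ^ 2 / 8) := by positivity
    linarith
  · have h1 : x ^ 2 / 8 ≤ Real.exp (x ^ 2 / 8) := by
      have := Real.add_one_le_exp (x ^ 2 / 8)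
      linarith
    have h2 : Real.exp (-(a / 4)) * Real.exp (x ^ 2 / 8 + a / 4) = Real.exp (x ^ 2 / 8) := by
      rw [← Real.exp_add]; ring_nf
    have h3 : Real.exp (x ^ 2 / 8 + a / 4) ≤ Real.exp (3 * x ^ 2 / 8) := by
      apply Real.exp_le_exp.2
      nlinarith
    have h4 : x ^ 2 ≤ 8 * Real.exp (x ^ 2 / 8) := by linarith
    calc x ^ 2 ≤ 8 * Real.exp (x ^ 2 / 8) := h4
      _ = 8 * (Real.exp (-(a / 4)) * Real.exp (x ^ 2 / 8 + a / 4)) := by rw [h2]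
      _ ≤ 8 * (Real.exp (-(a / 4)) * Real.exp (3 * x ^ 2 / 8)) := by
          have := Real.exp_pos (-(a / 4))
          nlinarith
      _ ≤ a + 8 * Real.exp (-(a / 4)) * Real.exp (3 * x ^ 2 / 8) := by linarith [mul_assoc (8:ℝ) (Real.exp (-(a/4))) (Real.exp (3*x^2/8))]

lemma aux_density_eq :
    (fun x : ℝ => ((gaussianPDFReal 0 1 x).toNNReal : ℝ) * Real.exp (3 * x ^ 2 / 8))
      = fun x : ℝ => (Real.sqrt (2 * Real.pi))⁻¹ * Real.exp (-(1/8 : ℝ) * x ^ 2) := by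
  funext x
  rw [Real.coe_toNNReal _ (gaussianPDFReal_nonneg 0 1 x)]
  simp only [gaussianPDFReal, NNReal.coe_one, mul_one, sub_zero]
  rw [mul_assoc, ← Real.exp_add]
  ring_nf

lemma aux_integrable : Integrable (fun x : ℝ => Real.exp (3 * x ^ 2 / 8)) (gaussianReal 0 1) := by
  rw [gaussianReal_of_var_ne_zero 0 one_ne_zero, gaussianPDF_def]
  have hmeas : Measurable fun x : ℝ => (gaussianPDFReal 0 1 x).toNNReal :=
    (measurable_gaussianPDFReal 0 1).real_toNNReal
  have : (fun x : ℝ => ENNReal.ofReal (gaussianPDFReal 0 1 x))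
      = fun x : ℝ => ((gaussianPDFReal 0 1 x).toNNReal : ℝ≥0∞) := rfl
  rw [this, integrable_withDensity_iff_integrable_smul hmeas]
  simp only [NNReal.smul_def, smul_eq_mul]
  rw [aux_density_eq]
  exact (integrable_exp_neg_mul_sq (by norm_num : (0:ℝ) < 1/8)).const_mul _

lemma aux_integral : ∫ x, Real.exp (3 * x ^ 2 / 8) ∂(gaussianReal 0 1) = 2 := by
  rw [gaussianReal_of_var_ne_zero 0 one_ne_zero, gaussianPDF_def]
  have hmeas : Measurable fun x : ℝ => (gaussianPDFReal 0 1 x).toNNReal :=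
    (measurable_gaussianPDFReal 0 1).real_toNNReal
  have h0 : (fun x : ℝ => ENNReal.ofReal (gaussianPDFReal 0 1 x))
      = fun x : ℝ => ((gaussianPDFReal 0 1 x).toNNReal : ℝ≥0∞) := rfl
  rw [h0, integral_withDensity_eq_integral_smul hmeas]
  simp only [NNReal.smul_def, smul_eq_mul]
  rw [aux_density_eq, integral_const_mul,
    integral_gaussian, ← Real.sqrt_inv, ← Real.sqrt_mul (by positivity)]
  rw [show (2 * Real.pi)⁻¹ * (Real.pi / (1/8)) = 4 by field_simp; ring]
  rw [show (4:ℝ) = 2 ^ 2 by norm_num, Real.sqrt_sq (by norm_num)]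

lemma aux_measurePreserving {n : ℕ} (i : Fin n) :
    MeasurePreserving (fun g : Fin n → ℝ => g i)
      (Measure.pi fun _ : Fin n => gaussianReal 0 1) (gaussianReal 0 1) := by
  refine ⟨measurable_pi_apply i, ?_⟩
  refine Measure.ext fun s hs => ?_
  rw [Measure.map_apply (measurable_pi_apply i) hs]
  have : (fun g : Fin n → ℝ => g i) ⁻¹' s = Function.eval i ⁻¹' s := rfl
  rw [this, ← Set.univ_pi_update_univ, Measure.pi_pi]
  rw [Finset.prod_eq_single i (fun j _ hj => by simp [Function.update_of_ne hj])
    (fun h => absurd (Finset.mem_univ i) h)]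
  simp

set_option maxHeartbeats 1000000 in
theorem stmt10 :
    ∃ c : ℝ, 0 < c ∧
      ∀ (n : ℕ), 2 ≤ n →
      ∃ (S : EuclideanSpace ℝ (Fin n) →L[ℝ] (Fin n → ℝ))
        (T : (Fin n → ℝ) →L[ℝ] EuclideanSpace ℝ (Fin n)),
        LinearMap.trace ℝ (EuclideanSpace ℝ (Fin n)) (T.comp S).toLinearMap = n ∧
        ‖T‖ * gaussNorm S ≤ c * Real.sqrt ((n : ℝ) * Real.log n) := by
  refine ⟨6, by norm_num, fun n hn => ?_⟩
  set E := EuclideanSpace ℝ (Fin n)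
  refine ⟨(PiLp.continuousLinearEquiv 2 ℝ (fun _ : Fin n => ℝ)).toContinuousLinearMap,
    ((PiLp.continuousLinearEquiv 2 ℝ (fun _ : Fin n => ℝ)).symm).toContinuousLinearMap, ?_, ?_⟩
  · have : (((PiLp.continuousLinearEquiv 2 ℝ (fun _ : Fin n => ℝ)).symm).toContinuousLinearMap.comp
        (PiLp.continuousLinearEquiv 2 ℝ (fun _ : Fin n => ℝ)).toContinuousLinearMap).toLinearMap
        = LinearMap.id := by
      ext x
      simp
    rw [this, LinearMap.trace_id]
    simp [E, finrank_euclideanSpace_fin]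
  · set μn := Measure.pi fun _ : Fin n => gaussianReal 0 1 with hμn
    set S := (PiLp.continuousLinearEquiv 2 ℝ (fun _ : Fin n => ℝ)).toContinuousLinearMap with hS
    set T := ((PiLp.continuousLinearEquiv 2 ℝ (fun _ : Fin n => ℝ)).symm).toContinuousLinearMap with hT0
    have hn1 : (1:ℝ) < (n:ℝ) := by exact_mod_cast lt_of_lt_of_le one_lt_two hn
    have hn0 : (0:ℝ) < (n:ℝ) := lt_trans one_pos hn1
    set L := Real.log n with hLdef
    have hLpos : 0 < L := Real.log_pos hn1
    have hL2 : (2:ℝ)/3 ≤ L := by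
      have h2 : Real.log 2 ≤ L := Real.log_le_log (by norm_num) (by exact_mod_cast hn)
      nlinarith [Real.log_two_gt_d9]
    have hcont : Continuous fun x : ℝ => Real.exp (3 * x ^ 2 / 8) := by continuity
    -- operator norm bound for T
    have hT : ‖T‖ ≤ Real.sqrt n := by
      refine ContinuousLinearMap.opNorm_le_bound _ (Real.sqrt_nonneg _) fun x => ?_
      have hx : ‖T x‖ = Real.sqrt (∑ i, ‖x i‖ ^ 2) := by
        rw [EuclideanSpace.norm_eq]
        rfl
      rw [hx]
      have h1 : ∑ i, ‖x i‖ ^ 2 ≤ (n:ℝ) * ‖x‖ ^ 2 := by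
        calc ∑ i : Fin n, ‖x i‖ ^ 2 ≤ ∑ _i : Fin n, ‖x‖ ^ 2 :=
              Finset.sum_le_sum fun i _ => pow_le_pow_left₀ (norm_nonneg _) (norm_le_pi_norm x i) 2
          _ = (n:ℝ) * ‖x‖ ^ 2 := by
              simp [Finset.sum_const, Finset.card_univ, nsmul_eq_mul]
      calc Real.sqrt (∑ i, ‖x i‖ ^ 2) ≤ Real.sqrt ((n:ℝ) * ‖x‖ ^ 2) := Real.sqrt_le_sqrt h1
        _ = Real.sqrt n * ‖x‖ := by
            rw [Real.sqrt_mul (le_of_lt hn0), Real.sqrt_sq (norm_nonneg _)]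
    -- integrability and values of the coordinate integrals
    have hint_i : ∀ i : Fin n, Integrable (fun g : Fin n → ℝ => Real.exp (3 * (g i) ^ 2 / 8)) μn :=
      fun i => ((aux_measurePreserving i).integrable_comp hcont.aestronglyMeasurable).2 aux_integrable
    have hval_i : ∀ i : Fin n, (∫ g : Fin n → ℝ, Real.exp (3 * (g i) ^ 2 / 8) ∂μn) = 2 := by
      intro i
      calc (∫ g : Fin n → ℝ, Real.exp (3 * (g i) ^ 2 / 8) ∂μn)
          = ∫ x, Real.exp (3 * x ^ 2 / 8) ∂(μn.map (fun g : Fin n → ℝ => g i)) :=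
            (integral_map (aux_measurePreserving i).measurable.aemeasurable
              hcont.aestronglyMeasurable).symm
        _ = 2 := by rw [(aux_measurePreserving i).map_eq, aux_integral]
    -- the dominating function
    have hdom_int : Integrable (fun g : Fin n → ℝ =>
        4 * L + 8 * Real.exp (-(4 * L / 4)) * ∑ i, Real.exp (3 * (g i) ^ 2 / 8)) μn := by
      refine (integrable_const _).add ?_
      exact (integrable_finset_sum _ (fun i _ => hint_i i)).const_mul _
    have hpt : ∀ g : Fin n → ℝ, ‖g‖ ^ 2 ≤
        4 * L + 8 * Real.exp (-(4 * L / 4)) * ∑ i, Real.exp (3 * (g i) ^ 2 / 8) := by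
      intro g
      have huniv : (Finset.univ : Finset (Fin n)).Nonempty :=
        ⟨⟨0, by omega⟩, Finset.mem_univ _⟩
      obtain ⟨i, -, hi⟩ := Finset.exists_mem_eq_sup Finset.univ huniv (fun i => ‖g i‖₊)
      have hnorm : ‖g‖ = ‖g i‖ := by rw [Pi.norm_def, hi]; rfl
      have h1 : ‖g i‖ ^ 2 = (g i) ^ 2 := by rw [Real.norm_eq_abs, sq_abs]
      have h2 := aux_pointwise (4 * L) (g i) (by positivity)
      have h3 : Real.exp (3 * (g i) ^ 2 / 8) ≤ ∑ j, Real.exp (3 * (g j) ^ 2 / 8) :=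
        Finset.single_le_sum (f := fun j : Fin n => Real.exp (3 * (g j) ^ 2 / 8)) (fun j _ => (Real.exp_pos _).le) (Finset.mem_univ i)
      have h4 : (0:ℝ) < 8 * Real.exp (-(4 * L / 4)) := by positivity
      have h5 : 8 * Real.exp (-(4 * L / 4)) * Real.exp (3 * (g i) ^ 2 / 8)
          ≤ 8 * Real.exp (-(4 * L / 4)) * ∑ j, Real.exp (3 * (g j) ^ 2 / 8) :=
        mul_le_mul_of_nonneg_left h3 h4.le
      rw [hnorm, h1]
      linarith
    -- the main integral bound
    have hI : (∫ g : Fin n → ℝ, ‖g‖ ^ 2 ∂μn) ≤ 28 * L := by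
      have hmono := integral_mono_of_nonneg
        (ae_of_all μn fun g : Fin n → ℝ => sq_nonneg ‖g‖) hdom_int (ae_of_all μn hpt)
      have hval : (∫ g : Fin n → ℝ,
          (4 * L + 8 * Real.exp (-(4 * L / 4)) * ∑ i, Real.exp (3 * (g i) ^ 2 / 8)) ∂μn)
          = 4 * L + 16 := by
        rw [integral_add (integrable_const _)
          ((integrable_finset_sum _ (fun i _ => hint_i i)).const_mul _),
          integral_const, integral_const_mul, integral_finset_sum _ (fun i _ => hint_i i)]
        simp only [hval_i, Finset.sum_const, Finset.card_univ, Fintype.card_fin, nsmul_eq_mul,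
          measure_univ, probReal_univ, ENNReal.toReal_one, smul_eq_mul, one_mul]
        have hexp : Real.exp (-(4 * L / 4)) = (n : ℝ)⁻¹ := by
          rw [show -(4 * L / 4) = -L by ring, Real.exp_neg, hLdef, Real.exp_log hn0]
        rw [hexp]
        field_simp
        ring
      rw [hval] at hmono
      calc (∫ g : Fin n → ℝ, ‖g‖ ^ 2 ∂μn) ≤ 4 * L + 16 := hmono
        _ ≤ 28 * L := by linarith
    -- assemble
    have hgauss : gaussNorm (⇑S) = Real.sqrt (∫ g : Fin n → ℝ, ‖g‖ ^ 2 ∂μn) := rfl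
    have hgaussle : gaussNorm (⇑S) ≤ Real.sqrt (28 * L) := by
      rw [hgauss]; exact Real.sqrt_le_sqrt hI
    have hgnn : 0 ≤ gaussNorm (⇑S) := by rw [hgauss]; exact Real.sqrt_nonneg _
    calc ‖T‖ * gaussNorm (⇑S) ≤ Real.sqrt n * Real.sqrt (28 * L) :=
          mul_le_mul hT hgaussle hgnn (Real.sqrt_nonneg _)
      _ = Real.sqrt ((n:ℝ) * (28 * L)) := (Real.sqrt_mul hn0.le _).symm
      _ ≤ Real.sqrt (36 * ((n:ℝ) * L)) := by
          apply Real.sqrt_le_sqrt; nlinarith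
      _ = 6 * Real.sqrt ((n:ℝ) * L) := by
          rw [show (36:ℝ) * ((n:ℝ) * L) = 6 ^ 2 * ((n:ℝ) * L) by norm_num,
            Real.sqrt_mul (by positivity), Real.sqrt_sq (by norm_num)]
end

section
/- Let N ≥ 1 and K ≥ 1 be natural numbers, and let R = (R(a|x))_{x∈[N],a∈[K]} be a family of real numbers such that ∑_{a=1}^K R(a|x) = C for every x ∈ [N], where C is a constant independent of x. Set Λ = max_{x∈[N]} ∑_{a=1}^K |R(a|x)|. Then there exist real numbers λ, μ with |λ| + |μ| = Λ and families P₁, P₂ ∈ S(N,K) such that R(a|x) = λ·P₁(a|x) + μ·P₂(a|x) for every x ∈ [N] and a ∈ [K]. -/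
open scoped BigOperators

theorem stmt11 (N K : ℕ) (hN : 1 ≤ N) (hK : 1 ≤ K)
    (R : Fin N → Fin K → ℝ) (C : ℝ) (hC : ∀ x, ∑ a, R x a = C) :
    ∃ (lam mu : ℝ) (P₁ P₂ : Fin N → Fin K → ℝ),
      (∀ x a, 0 ≤ P₁ x a) ∧ (∀ x, ∑ a, P₁ x a = 1) ∧
      (∀ x a, 0 ≤ P₂ x a) ∧ (∀ x, ∑ a, P₂ x a = 1) ∧
      |lam| + |mu| =
        Finset.univ.sup' (Finset.univ_nonempty_iff.mpr ⟨⟨0, hN⟩⟩)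
          (fun x : Fin N => ∑ a, |R x a|) ∧
      (∀ x a, R x a = lam * P₁ x a + mu * P₂ x a) := by
  have hKpos : (0:ℝ) < K := by exact_mod_cast hK
  set L := Finset.univ.sup' (Finset.univ_nonempty_iff.mpr ⟨⟨0, hN⟩⟩)
      (fun x : Fin N => ∑ a, |R x a|) with hL
  have hLx : ∀ x, ∑ a, |R x a| ≤ L := by
    intro x
    rw [hL]
    exact Finset.le_sup' (fun x : Fin N => ∑ a, |R x a|) (Finset.mem_univ x)
  have habsC : |C| ≤ L := by
    refine le_trans ?_ (hLx ⟨0, hN⟩)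
    rw [← hC ⟨0, hN⟩]
    exact Finset.abs_sum_le_sum_abs _ _
  set s : Fin N → ℝ := fun x => ∑ a, max (R x a) 0 with hs
  set t : Fin N → ℝ := fun x => ∑ a, max (-R x a) 0 with ht
  have hs0 : ∀ x, 0 ≤ s x := fun x =>
    Finset.sum_nonneg fun a _ => le_max_right _ _
  have ht0 : ∀ x, 0 ≤ t x := fun x =>
    Finset.sum_nonneg fun a _ => le_max_right _ _
  have hst : ∀ x, s x + t x = ∑ a, |R x a| := by
    intro x
    rw [hs, ht, ← Finset.sum_add_distrib]
    exact Finset.sum_congr rfl fun a _ => max_zero_add_max_neg_zero_eq_abs_self _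
  have hstC : ∀ x, s x - t x = C := by
    intro x
    rw [hs, ht, ← Finset.sum_sub_distrib]
    rw [← hC x]
    exact Finset.sum_congr rfl fun a _ => max_zero_sub_eq_self _
  set lam := (L + C) / 2 with hlam
  set mu := (C - L) / 2 with hmu
  have hlam0 : 0 ≤ lam := by
    have := neg_abs_le C; rw [hlam]; linarith
  have hslam : ∀ x, s x ≤ lam := by
    intro x
    have h1 := hLx x
    have h2 := hst x
    have h3 := hstC x
    rw [hlam]; linarith
  have htlam : ∀ x, t x ≤ lam - C := by
    intro x
    have h3 := hstC x
    have := hslam x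
    linarith
  set d : Fin N → ℝ := fun x => lam - s x with hd
  have hd0 : ∀ x, 0 ≤ d x := by
    intro x
    show 0 ≤ lam - s x
    have := hslam x
    linarith
  set P₁ : Fin N → Fin K → ℝ := fun x a =>
    if lam = 0 then (K:ℝ)⁻¹ else (max (R x a) 0 + d x / K) / lam with hP1
  set P₂ : Fin N → Fin K → ℝ := fun x a =>
    if lam = C then (K:ℝ)⁻¹ else (max (-R x a) 0 + d x / K) / (lam - C) with hP2
  refine ⟨lam, mu, P₁, P₂, ?_, ?_, ?_, ?_, ?_, ?_⟩
  · intro x a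
    simp only [hP1]
    split
    · positivity
    · rename_i h
      have hlpos : 0 < lam := lt_of_le_of_ne hlam0 (Ne.symm h)
      have h1 := hd0 x
      have h2 : (0:ℝ) ≤ max (R x a) 0 + d x / K := by positivity
      positivity
  · intro x
    simp only [hP1]
    split
    · simp [Finset.sum_const, Finset.card_univ]
      field_simp
    · rename_i h
      rw [← Finset.sum_div, Finset.sum_add_distrib, Finset.sum_const,
        Finset.card_univ, Fintype.card_fin, nsmul_eq_mul]
      have hKd : (K:ℝ) * (d x / K) = d x := by field_simp
      rw [hKd]
      show (s x + (lam - s x)) / lam = 1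
      rw [div_eq_one_iff_eq h]
      ring
  · intro x a
    simp only [hP2]
    split
    · positivity
    · rename_i h
      have hlCpos : 0 < lam - C := by
        rcases lt_or_eq_of_le (by have := le_abs_self C; rw [hlam]; linarith :
            C ≤ lam) with h' | h'
        · linarith
        · exact absurd h'.symm h
      have h1 := hd0 x
      have h2 : (0:ℝ) ≤ max (-R x a) 0 + d x / K := by positivity
      positivity
  · intro x
    simp only [hP2]
    split
    · simp [Finset.sum_const, Finset.card_univ]
      field_simp
    · rename_i h
      have h2 : lam - C ≠ 0 := sub_ne_zero.mpr h
      rw [← Finset.sum_div, Finset.sum_add_distrib, Finset.sum_const,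
        Finset.card_univ, Fintype.card_fin, nsmul_eq_mul]
      have hKd : (K:ℝ) * (d x / K) = d x := by field_simp
      rw [hKd]
      show (t x + (lam - s x)) / (lam - C) = 1
      rw [div_eq_one_iff_eq h2]
      have := hstC x
      linarith
  · have h1 : |lam| = lam := abs_of_nonneg hlam0
    have h2 : |mu| = -mu := abs_of_nonpos (by
      have := le_abs_self C; rw [hmu]; linarith)
    rw [h1, h2, hlam, hmu]; ring
  · intro x a
    simp only [hP1, hP2]
    by_cases h0 : lam = 0
    · by_cases hC0 : lam = C
      · -- C = 0, L = 0, everything 0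
        have hCz : C = 0 := by rw [← hC0, h0]
        have hLz : L = 0 := by rw [hlam] at h0; linarith
        have hmuz : mu = 0 := by rw [hmu, hCz, hLz]; ring
        have hRz : R x a = 0 := by
          have hsum : ∑ a, |R x a| = 0 :=
            le_antisymm (hLz ▸ hLx x) (Finset.sum_nonneg fun a _ => abs_nonneg _)
          have := (Finset.sum_eq_zero_iff_of_nonneg
            (fun a _ => abs_nonneg (R x a))).mp hsum a (Finset.mem_univ a)
          exact abs_eq_zero.mp this
        rw [hRz, h0, hmuz]
        simp
      · rw [if_pos h0, if_neg hC0]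
        have h2 : lam - C ≠ 0 := sub_ne_zero.mpr hC0
        have hsx : s x = 0 := le_antisymm (by rw [← h0]; exact hslam x) (hs0 x)
        have hRa : max (R x a) 0 = 0 :=
          (Finset.sum_eq_zero_iff_of_nonneg
            (fun a _ => le_max_right (R x a) 0)).mp hsx a (Finset.mem_univ a)
        have hRle : R x a ≤ 0 := by
          by_contra hc
          push_neg at hc
          rw [max_eq_left hc.le] at hRa
          linarith
        have hdx : d x = 0 := by show lam - s x = 0; rw [hsx, h0]; ring
        have hmax : max (-R x a) 0 = -R x a := max_eq_left (by linarith)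
        have hmul : mu = -(lam - C) := by rw [hmu, hlam]; ring
        have e2 : -(lam - C) * ((-R x a + d x / K) / (lam - C)) = -(-R x a + d x / K) := by
          rw [neg_mul, mul_comm, div_mul_cancel₀ _ h2]
        rw [hmax, hmul, e2, h0, hdx]
        simp
    · by_cases hC0 : lam = C
      · rw [if_neg h0, if_pos hC0]
        have htx : t x = 0 := le_antisymm (by
          have := htlam x; rw [← hC0] at this; linarith) (ht0 x)
        have hRa : max (-R x a) 0 = 0 :=
          (Finset.sum_eq_zero_iff_of_nonneg
            (fun a _ => le_max_right (-R x a) 0)).mp htx a (Finset.mem_univ a)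
        have hRge : 0 ≤ R x a := by
          by_contra hc
          push_neg at hc
          rw [max_eq_left (by linarith)] at hRa
          linarith
        have hdx : d x = 0 := by
          show lam - s x = 0
          have := hstC x
          linarith [hC0]
        have hmuz : mu = 0 := by
          have hLC : L = C := by rw [hlam] at hC0; linarith
          rw [hmu, hLC]; ring
        have hmax : max (R x a) 0 = R x a := max_eq_left hRge
        have e1 : lam * ((R x a + d x / K) / lam) = R x a + d x / K := by
          rw [mul_comm, div_mul_cancel₀ _ h0]
        rw [hmax, e1, hmuz, hdx]
        simp
      · rw [if_neg h0, if_neg hC0]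
        have h2 : lam - C ≠ 0 := sub_ne_zero.mpr hC0
        have hmul : mu = -(lam - C) := by rw [hmu, hlam]; ring
        have e1 : lam * ((max (R x a) 0 + d x / K) / lam) = max (R x a) 0 + d x / K := by
          rw [mul_comm, div_mul_cancel₀ _ h0]
        have e2 : -(lam - C) * ((max (-R x a) 0 + d x / K) / (lam - C)) =
            -(max (-R x a) 0 + d x / K) := by
          rw [neg_mul, mul_comm, div_mul_cancel₀ _ h2]
        have key : max (R x a) 0 - max (-R x a) 0 = R x a := max_zero_sub_eq_self _
        rw [hmul, e1, e2]
        linarith [key]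
end
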